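/- arXiv:2408.05199 — 2 statements merged into one kernel-verified Lean document; each statement's English description precedes it below -/
import Mathlib

section
/- For every complementary pair of minors det(m), det(n) ∈ A₁, the element det(m) − (−1)^{δ(m)+δ(n)} det(n) lies in the kernel of φ_W; that is, the ideal Λ₁ is a subideal of I(X). -/
open MvPolynomial

/-! Setup following "Rees algebras of ideals submaximally generated by quadrics".
`R = K[x_1, …, x_d]`, `I = (x_i x_j (i ≠ j), x_k^2 - x_d^2 (k ≠ d))`,
`W = K[w_{ij} : 1 ≤ i ≤ j ≤ d, (i,j) ≠ (d,d)]` with `w_{ij} = w_{ji}`, `w_{dd} = 0`,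
`φ_W : W → R`, `w_{ij} ↦ g_{ij}`, `I(X) = ker φ_W`, and the candidate ideal
`Λ = Λ₀ + Λ₁ + Λ₂` built from 2×2 minors of the symmetric matrix `M = (w_{ij})`. -/

/-- 1-based index set `{1, …, d}`. -/
abbrev Idx (d : ℕ) : Type := (Set.Icc 1 d : Set ℕ)

/-- Index set for the variables `w_{ij}`, `1 ≤ i ≤ j ≤ d`, `(i,j) ≠ (d,d)`. -/
abbrev SymIdx (d : ℕ) : Type :=
  {p : Idx d × Idx d // p.1 ≤ p.2 ∧ ¬(p.1.1 = d ∧ p.2.1 = d)}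

/-- The entry `w_{ij}` of `M` as an element of `W`, with the conventions
`w_{ij} = w_{ji}` and `w_{dd} = 0`. -/
noncomputable def wv (K : Type*) [Field K] (d : ℕ) (i j : Idx d) :
    MvPolynomial (SymIdx d) K :=
  if h : (min i j).1 = d ∧ (max i j).1 = d then 0
  else X (⟨(min i j, max i j), ⟨min_le_max, h⟩⟩ : SymIdx d)

/-- The last variable `x_d` of `R = K[x_1, …, x_d]`. -/
noncomputable def xd (K : Type*) [Field K] (d : ℕ) : MvPolynomial (Idx d) K :=
  if h : 1 ≤ d then X (⟨d, Set.mem_Icc.mpr ⟨h, le_rfl⟩⟩ : Idx d) else 0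

/-- The quadrics `g_{ij} = x_i x_j` (for `i ≠ j`) and `g_{ii} = x_i ^ 2 - x_d ^ 2`. -/
noncomputable def gq (K : Type*) [Field K] (d : ℕ) (i j : Idx d) : MvPolynomial (Idx d) K :=
  if i = j then X i ^ 2 - xd K d ^ 2 else X i * X j

/-- The `K`-algebra map `φ_W : W → R`, `w_{ij} ↦ g_{ij}`. -/
noncomputable def phiW (K : Type*) [Field K] (d : ℕ) :
    MvPolynomial (SymIdx d) K →ₐ[K] MvPolynomial (Idx d) K :=
  aeval (fun p : SymIdx d => gq K d p.1.1 p.1.2)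

/-- `I(X) = ker φ_W`, the defining ideal of the special fiber ring `F(I)`. -/
noncomputable def IX (K : Type*) [Field K] (d : ℕ) : Ideal (MvPolynomial (SymIdx d) K) :=
  RingHom.ker (phiW K d).toRingHom

/-- A `2 × 2` submatrix of the symmetric matrix `M = (w_{ij})`, recorded by its (ordered)
rows `r1 < r2` and columns `c1 < c2`. -/
structure Sub2 (d : ℕ) where
  r1 : Idx d
  r2 : Idx d
  c1 : Idx d
  c2 : Idx d
  hr : r1 < r2
  hc : c1 < c2

/-- The determinant of a `2 × 2` submatrix of `M`, i.e. the minor `[r1 r2 | c1 c2]`. -/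
noncomputable def sdet (K : Type*) [Field K] (d : ℕ) (m : Sub2 d) :
    MvPolynomial (SymIdx d) K :=
  wv K d m.r1 m.c1 * wv K d m.r2 m.c2 - wv K d m.r1 m.c2 * wv K d m.r2 m.c1

/-- The set of row indices of a `2 × 2` submatrix. -/
def Sub2.rows {d : ℕ} (m : Sub2 d) : Finset (Idx d) := {m.r1, m.r2}

/-- The set of column indices of a `2 × 2` submatrix. -/
def Sub2.cols {d : ℕ} (m : Sub2 d) : Finset (Idx d) := {m.c1, m.c2}

/-- `inA s m` says that the minor `det m` belongs to `A_s`: the row and column index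
sets of `m` meet in exactly `s` indices (equivalently, `m` contains exactly `s`
diagonal entries of `M`). -/
def inA {d : ℕ} (s : ℕ) (m : Sub2 d) : Prop := (m.rows ∩ m.cols).card = s

/-- Two `2 × 2` submatrices of `M` are complementary: there is a `4 × 4` principal
submatrix (with index set `S`, `|S| = 4`) containing both, in which they share no rows
and no columns. -/
def ComplSub2 {d : ℕ} (m n : Sub2 d) : Prop :=
  ∃ S : Finset (Idx d), S.card = 4 ∧ m.rows ∪ n.rows ⊆ S ∧ m.cols ∪ n.cols ⊆ S ∧
    Disjoint m.rows n.rows ∧ Disjoint m.cols n.cols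

/-- `δ(m) = 0` if the diagonal entry of `M` appearing in `m` lies on the diagonal of `m`,
and `δ(m) = 1` if it lies on the antidiagonal (intended for minors in `A₁`). -/
def delta {d : ℕ} (m : Sub2 d) : ℕ := if m.r1 = m.c1 ∨ m.r2 = m.c2 then 0 else 1

/-- `Λ₀`: the ideal generated by the minors in `A₀`. -/
noncomputable def Lam0 (K : Type*) [Field K] (d : ℕ) : Ideal (MvPolynomial (SymIdx d) K) :=
  Ideal.span {f | ∃ m : Sub2 d, inA 0 m ∧ f = sdet K d m}

/-- `Λ₁`: generated by `det m - (-1)^(δ m + δ n) * det n` over complementary pairs in `A₁`. -/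
noncomputable def Lam1 (K : Type*) [Field K] (d : ℕ) : Ideal (MvPolynomial (SymIdx d) K) :=
  Ideal.span {f | ∃ m n : Sub2 d, inA 1 m ∧ inA 1 n ∧ ComplSub2 m n ∧
    f = sdet K d m - (-1 : MvPolynomial (SymIdx d) K) ^ (delta m + delta n) * sdet K d n}

/-- `Λ₂`: generated by `(det m1 + det n1) - (det m2 + det n2)` over pairs of complementary
matrices (PCMs), all four lying in a common `4 × 4` principal submatrix. -/
noncomputable def Lam2 (K : Type*) [Field K] (d : ℕ) : Ideal (MvPolynomial (SymIdx d) K) :=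
  Ideal.span {f | ∃ m1 n1 m2 n2 : Sub2 d, inA 2 m1 ∧ inA 2 n1 ∧ inA 2 m2 ∧ inA 2 n2 ∧
    ComplSub2 m1 n1 ∧ ComplSub2 m2 n2 ∧
    (∃ S : Finset (Idx d), S.card = 4 ∧
      m1.rows ∪ m1.cols ∪ n1.rows ∪ n1.cols ∪ m2.rows ∪ m2.cols ∪ n2.rows ∪ n2.cols ⊆ S) ∧
    f = (sdet K d m1 + sdet K d n1) - (sdet K d m2 + sdet K d n2)}

/-- The candidate ideal `Λ = Λ₀ + Λ₁ + Λ₂`. -/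
noncomputable def Lam (K : Type*) [Field K] (d : ℕ) : Ideal (MvPolynomial (SymIdx d) K) :=
  Lam0 K d + Lam1 K d + Lam2 K d

/-- The Hilbert function of an ideal `N ⊆ W` in degree `i`:
the `K`-dimension of the degree-`i` homogeneous component of `N`. -/
noncomputable def HFI (K : Type*) [Field K] (d : ℕ)
    (N : Ideal (MvPolynomial (SymIdx d) K)) (i : ℕ) : ℕ :=
  Module.finrank K
    ↥(Submodule.restrictScalars K N ⊓ homogeneousSubmodule (SymIdx d) K i)


/-! Under `φ_W` a minor with a single diagonal entry `w_{xx}`, unpaired row index `a` and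
unpaired column index `b` maps to `± x_d² x_a x_b`: the `x_x² x_a x_b` terms of
`g_{xx} g_{ab}` and `g_{xb} g_{ax}` cancel, and the sign is `-(-1)^δ`. Complementary minors
in a `4 × 4` principal submatrix with index set `S` have rows and columns `S \ rows`,
`S \ cols`, hence the same unpaired indices `{a, b} = rows ∆ cols`, so their images agree up
to `(-1)^(δ(m) + δ(n))`. -/

open scoped symmDiff

theorem sdiff_symmDiff_sdiff_of_le {α : Type*} [GeneralizedBooleanAlgebra α] {a b c : α}
    (ha : a ≤ c) (hb : b ≤ c) : (c \ a) ∆ (c \ b) = a ∆ b := by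
  rw [symmDiff_def, sdiff_sdiff_sdiff_cancel_left hb, sdiff_sdiff_sdiff_cancel_left ha,
    symmDiff_def, sup_comm]

theorem Finset.eq_sdiff_of_disjoint_of_card_le {α : Type*} [DecidableEq α] {s t u : Finset α}
    (hd : Disjoint s t) (hsub : s ∪ t ⊆ u) (hcard : u.card ≤ s.card + t.card) :
    t = u \ s := by
  rw [← Finset.eq_of_subset_of_card_le hsub (by rwa [Finset.card_union_of_disjoint hd]),
    Finset.union_sdiff_cancel_left hd]

theorem Finset.pair_symmDiff_pair {α : Type*} [DecidableEq α] {x a b : α}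
    (hax : a ≠ x) (hbx : b ≠ x) (hab : a ≠ b) : ({x, a} : Finset α) ∆ {x, b} = {a, b} := by
  ext y
  simp only [Finset.mem_symmDiff, Finset.mem_insert, Finset.mem_singleton]
  grind

section Quadrics

variable {K : Type*} [Field K] {d : ℕ}

theorem gq_symm (i j : Idx d) : gq K d i j = gq K d j i := by
  unfold gq
  by_cases h : i = j
  · simp [h]
  · simp [h, Ne.symm h, mul_comm]

theorem gq_self (i : Idx d) : gq K d i i = X i ^ 2 - xd K d ^ 2 := if_pos rfl

theorem gq_of_ne {i j : Idx d} (h : i ≠ j) : gq K d i j = X i * X j := if_neg h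

theorem gq_last (i : Idx d) (hi : i.1 = d) : gq K d i i = 0 := by
  have hx : xd K d = X i := by
    rw [xd, dif_pos (i.2.1.trans i.2.2)]
    exact congrArg X (Subtype.ext hi.symm)
  rw [gq_self, hx, sub_self]

theorem gq_min_max (i j : Idx d) : gq K d (min i j) (max i j) = gq K d i j := by
  rcases le_total i j with h | h
  · rw [min_eq_left h, max_eq_right h]
  · rw [min_eq_right h, max_eq_left h, gq_symm]

theorem phiW_wv (i j : Idx d) : phiW K d (wv K d i j) = gq K d i j := by
  unfold wv
  split_ifs with h
  · have hi : i.1 = d := le_antisymm i.2.2 (h.1.symm.le.trans (min_le_left i j))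
    have hj : j.1 = d := le_antisymm j.2.2 (h.1.symm.le.trans (min_le_right i j))
    rw [map_zero, Subtype.ext (hi.trans hj.symm), gq_last j hj]
  · rw [phiW, aeval_X, gq_min_max]

theorem phiW_sdet (m : Sub2 d) :
    phiW K d (sdet K d m) =
      gq K d m.r1 m.c1 * gq K d m.r2 m.c2 - gq K d m.r1 m.c2 * gq K d m.r2 m.c1 := by
  simp only [sdet, map_sub, map_mul, phiW_wv]

theorem gq_minor_of_one_diag {x a b : Idx d} (hax : a ≠ x) (hbx : b ≠ x) (hab : a ≠ b) :
    gq K d x x * gq K d a b - gq K d x b * gq K d a x =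
      -(xd K d ^ 2 * ∏ i ∈ ({x, a} : Finset (Idx d)) ∆ {x, b}, X i) := by
  rw [Finset.pair_symmDiff_pair hax hbx hab, Finset.prod_pair hab, gq_self, gq_of_ne hab,
    gq_of_ne hbx.symm, gq_of_ne hax]
  ring

end Quadrics

namespace Sub2

variable {K : Type*} [Field K] {d : ℕ}

theorem card_rows (m : Sub2 d) : m.rows.card = 2 := Finset.card_pair m.hr.ne

theorem card_cols (m : Sub2 d) : m.cols.card = 2 := Finset.card_pair m.hc.ne

theorem phiW_sdet_of_inA_one {m : Sub2 d} (hm : inA 1 m) :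
    phiW K d (sdet K d m) = -(-1) ^ delta m * xd K d ^ 2 * ∏ i ∈ m.rows ∆ m.cols, X i := by
  obtain ⟨x, hx⟩ := Finset.card_eq_one.mp hm
  have hx_mem : x ∈ m.rows ∩ m.cols := hx ▸ Finset.mem_singleton_self x
  have hne : ∀ {a b}, a ∈ m.rows → b ∈ m.cols → a ≠ x → a ≠ b := fun ha hb hax hab =>
    hax (Finset.mem_singleton.mp (hx ▸ Finset.mem_inter.mpr ⟨ha, hab ▸ hb⟩))
  obtain ⟨r1, r2, c1, c2, hr, hc⟩ := m
  simp only [rows, cols, Finset.mem_inter, Finset.mem_insert, Finset.mem_singleton] at hx_mem hne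
  rw [phiW_sdet, rows, cols]
  dsimp only [delta]
  obtain ⟨rfl | rfl, rfl | rfl⟩ := hx_mem
  · rw [if_pos (Or.inl rfl)]
    linear_combination gq_minor_of_one_diag (K := K) hr.ne' hc.ne' (hne (by simp) (by simp) hr.ne')
  · rw [if_neg (not_or.2 ⟨hc.ne', hr.ne'⟩), Finset.pair_comm c1]
    linear_combination -gq_minor_of_one_diag (K := K) hr.ne' hc.ne (hne (by simp) (by simp) hr.ne')
  · rw [if_neg (not_or.2 ⟨hr.ne, hc.ne⟩), Finset.pair_comm r1]
    linear_combination -gq_minor_of_one_diag (K := K) hr.ne hc.ne' (hne (by simp) (by simp) hr.ne)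
  · rw [if_pos (Or.inr rfl), Finset.pair_comm r1, Finset.pair_comm c1]
    linear_combination gq_minor_of_one_diag (K := K) hr.ne hc.ne (hne (by simp) (by simp) hr.ne)

end Sub2

theorem ComplSub2.symmDiff_rows_cols {d : ℕ} {m n : Sub2 d} (h : ComplSub2 m n) :
    n.rows ∆ n.cols = m.rows ∆ m.cols := by
  obtain ⟨S, hS, hrows, hcols, hdrows, hdcols⟩ := h
  rw [Finset.eq_sdiff_of_disjoint_of_card_le hdrows hrows (by rw [hS, m.card_rows, n.card_rows]),
    Finset.eq_sdiff_of_disjoint_of_card_le hdcols hcols (by rw [hS, m.card_cols, n.card_cols])]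
  exact sdiff_symmDiff_sdiff_of_le (Finset.union_subset_left hrows)
    (Finset.union_subset_left hcols)

theorem Lam1_le_fiber_ideal_general (K : Type*) [Field K] (d : ℕ) :
    Lam1 K d ≤ IX K d := by
  rw [Lam1, Ideal.span_le]
  rintro f ⟨m, n, hm, hn, hmn, rfl⟩
  have hsq : ((-1 : MvPolynomial (Idx d) K) ^ delta n) ^ 2 = 1 := by
    rw [← pow_mul, mul_comm, pow_mul, neg_one_sq, one_pow]
  simp only [SetLike.mem_coe, IX, RingHom.mem_ker, AlgHom.toRingHom_eq_coe, RingHom.coe_coe,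
    map_sub, map_mul, map_pow, map_neg, map_one]
  rw [Sub2.phiW_sdet_of_inA_one hm, Sub2.phiW_sdet_of_inA_one hn,
    hmn.symmDiff_rows_cols, pow_add]
  linear_combination ((-1) ^ delta m * xd K d ^ 2 * ∏ i ∈ m.rows ∆ m.cols, X i) * hsq

/-- For every complementary pair `det m, det n ∈ A₁`, the element
`det m - (-1)^(δ m + δ n) det n` lies in `ker φ_W`; i.e. `Λ₁ ⊆ I(X)`. -/
theorem Lam1_le_fiber_ideal (K : Type*) [Field K] [CharZero K] (d : ℕ) (hd : 4 ≤ d) :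
    Lam1 K d ≤ IX K d :=
  Lam1_le_fiber_ideal_general K d
end

section
/- Every monomial in K₀ = {w_{ik}w_{jl}, w_{il}w_{jk} : i < j < k < l} is the ω-leading term of an element of Λ₀, so K₀ ⊆ in(Λ₀); moreover HF_{Λ₀}(2) ≥ |K₀| = 2·C(d,4). -/
open MvPolynomial

/-! ### The monomial order `ω` and initial ideals -/

/-- The order `ω` on the variables: `w_{ij} <_ω w_{kl}` iff `max{i,j} < max{k,l}`, or the
maxima agree and `min{i,j} < min{k,l}`. (Variables are stored with `i ≤ j`.) -/
def varLT {d : ℕ} (p q : SymIdx d) : Prop :=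
  p.1.2.1 < q.1.2.1 ∨ (p.1.2.1 = q.1.2.1 ∧ p.1.1.1 < q.1.1.1)

/-- `p ≤_ω q` on variables. -/
def varLE {d : ℕ} (p q : SymIdx d) : Prop := varLT p q ∨ p = q

/-- Total degree of a monomial exponent. -/
def mdeg {d : ℕ} (μ : SymIdx d →₀ ℕ) : ℕ := μ.sum fun _ e => e

/-- The graded reverse lexicographic order on monomials induced by the variable order `ω`:
`μ <_ω ν` iff `deg μ < deg ν`, or the degrees agree and at the `ω`-smallest variable where
`μ` and `ν` differ, `μ` has the strictly larger exponent. -/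
def grevlexLT {d : ℕ} (μ ν : SymIdx d →₀ ℕ) : Prop :=
  mdeg μ < mdeg ν ∨
    (mdeg μ = mdeg ν ∧ ∃ p : SymIdx d, ν p < μ p ∧ ∀ q : SymIdx d, varLT q p → μ q = ν q)

/-- `μ` is the `ω`-leading monomial of `F`. -/
def IsLeadMon {d : ℕ} {K : Type*} [Field K] (F : MvPolynomial (SymIdx d) K)
    (μ : SymIdx d →₀ ℕ) : Prop :=
  μ ∈ F.support ∧ ∀ ν ∈ F.support, ν ≠ μ → grevlexLT ν μ

/-- The exponent of the monomial `w_{ij}` (equal to `0`, i.e. the monomial `1`, in the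
degenerate case `(i,j) = (d,d)` where `w_{dd} = 0`; this case is avoided below). -/
noncomputable def wexp (d : ℕ) (i j : Idx d) : SymIdx d →₀ ℕ :=
  if h : (min i j).1 = d ∧ (max i j).1 = d then 0
  else Finsupp.single (⟨(min i j, max i j), ⟨min_le_max, h⟩⟩ : SymIdx d) 1

open Classical in
/-- The `ω`-larger of two monomials. -/
noncomputable def grevlexMax {d : ℕ} (μ ν : SymIdx d →₀ ℕ) : SymIdx d →₀ ℕ :=
  if grevlexLT μ ν then ν else μ

/-- The initial ideal of `N` with respect to `ω`: the ideal generated by the leading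
monomials of the elements of `N`. -/
noncomputable def inIdeal (K : Type*) [Field K] (d : ℕ)
    (N : Ideal (MvPolynomial (SymIdx d) K)) : Ideal (MvPolynomial (SymIdx d) K) :=
  Ideal.span {g | ∃ F ∈ N, ∃ μ : SymIdx d →₀ ℕ, IsLeadMon F μ ∧ g = monomial μ (1 : K)}

/-- `K₀ = {w_{ik} w_{jl}, w_{il} w_{jk} : i < j < k < l}`. -/
def K0set (d : ℕ) : Set (SymIdx d →₀ ℕ) :=
  {μ | ∃ i j k l : Idx d, i < j ∧ j < k ∧ k < l ∧
    (μ = wexp d i k + wexp d j l ∨ μ = wexp d i l + wexp d j k)}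

/-- `K₁ = {max_ω {w_{jl} w_{il}, w_{ij} w_{ll}} : i ≠ j, l > min({1,…,d} ∖ {i,j})}`
(when `l = d` the candidate `w_{ij} w_{ll}` degenerates since `w_{dd} = 0`, and the
maximum is `w_{il} w_{jl}`). -/
def K1set (d : ℕ) : Set (SymIdx d →₀ ℕ) :=
  {μ | ∃ i j l : Idx d, i ≠ j ∧ (∃ k : Idx d, k ≠ i ∧ k ≠ j ∧ k < l) ∧
    ((l.1 = d ∧ μ = wexp d i l + wexp d j l) ∨
     (l.1 ≠ d ∧ μ = grevlexMax (wexp d i l + wexp d j l) (wexp d i j + wexp d l l)))}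

/-- `K₂ = {w_{ij}² : i ≥ 2, j ≥ 4, i ≠ j}`. -/
def K2set (d : ℕ) : Set (SymIdx d →₀ ℕ) :=
  {μ | ∃ i j : Idx d, 2 ≤ i.1 ∧ 4 ≤ j.1 ∧ i ≠ j ∧ μ = wexp d i j + wexp d i j}

/-! For `i < j < k < l`, the minors `[il|jk] = w_{ij}w_{kl} - w_{ik}w_{jl}` and
`[ij|kl] = w_{ik}w_{jl} - w_{il}w_{jk}` lie in `Λ₀`. In a reverse lexicographic order the
leading term of such a binomial is the monomial avoiding the `ω`-smallest variable, here
`w_{ij}` resp. `w_{ik}`, so the leading monomials are exactly the two elements of `K₀` on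
`{i, j, k, l}`. Quadrics of `Λ₀` with pairwise distinct leading monomials are linearly
independent, which gives `HF_{Λ₀}(2) ≥ |K₀|`; and `K₀` is in bijection with pairs of a
`4`-subset of `{1, …, d}` and one of its two monomials. -/

variable {d : ℕ}

section VariableOrder

lemma varLT_irrefl (p : SymIdx d) : ¬ varLT p p := by
  simp [varLT]

lemma ne_of_varLT {p q : SymIdx d} (h : varLT p q) : p ≠ q := by
  rintro rfl
  exact varLT_irrefl p h

lemma varLT_trans {p q r : SymIdx d} (hpq : varLT p q) (hqr : varLT q r) : varLT p r := by
  unfold varLT at *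
  omega

lemma varLT_or_varLT_of_ne {p q : SymIdx d} (h : p ≠ q) : varLT p q ∨ varLT q p := by
  by_contra! hpq
  unfold varLT at hpq
  have hmin : p.1.1.1 = q.1.1.1 := by omega
  have hmax : p.1.2.1 = q.1.2.1 := by omega
  exact h (Subtype.ext (Prod.ext (Subtype.ext hmin) (Subtype.ext hmax)))

def SymIdx.ofLT {i j : Idx d} (h : i < j) : SymIdx d :=
  ⟨(i, j), h.le, fun hd => h.ne (Subtype.ext (hd.1.trans hd.2.symm))⟩

lemma varLT_ofLT_iff {i j k l : Idx d} (hij : i < j) (hkl : k < l) :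
    varLT (SymIdx.ofLT hij) (SymIdx.ofLT hkl) ↔ j.1 < l.1 ∨ (j.1 = l.1 ∧ i.1 < k.1) :=
  Iff.rfl

lemma SymIdx.ofLT_inj {i j k l : Idx d} (hij : i < j) (hkl : k < l) :
    SymIdx.ofLT hij = SymIdx.ofLT hkl ↔ i.1 = k.1 ∧ j.1 = l.1 := by
  simp [SymIdx.ofLT, Subtype.ext_iff]

end VariableOrder

section Grevlex

variable {μ ν ρ : SymIdx d →₀ ℕ}

lemma mdeg_le_of_grevlexLT (h : grevlexLT μ ν) : mdeg μ ≤ mdeg ν :=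
  h.elim le_of_lt fun h => h.1.le

lemma grevlexLT_irrefl (μ : SymIdx d →₀ ℕ) : ¬ grevlexLT μ μ := by
  rintro (h | ⟨-, p, hp, -⟩) <;> exact lt_irrefl _ ‹_›

lemma grevlexLT_trans (h₁ : grevlexLT μ ν) (h₂ : grevlexLT ν ρ) : grevlexLT μ ρ := by
  rcases h₁ with h₁ | ⟨e₁, p, hp, below₁⟩
  · exact Or.inl (h₁.trans_le (mdeg_le_of_grevlexLT h₂))
  rcases h₂ with h₂ | ⟨e₂, q, hq, below₂⟩
  · exact Or.inl (e₁ ▸ h₂)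
  refine Or.inr ⟨e₁.trans e₂, ?_⟩
  rcases eq_or_ne p q with rfl | hpq
  · exact ⟨p, hq.trans hp, fun r hr => (below₁ r hr).trans (below₂ r hr)⟩
  rcases varLT_or_varLT_of_ne hpq with hpq | hqp
  · refine ⟨p, by rw [← below₂ p hpq]; exact hp, fun r hr => ?_⟩
    exact (below₁ r hr).trans (below₂ r (varLT_trans hr hpq))
  · refine ⟨q, by rw [below₁ q hqp]; exact hq, fun r hr => ?_⟩
    exact (below₁ r (varLT_trans hr hqp)).trans (below₂ r hr)

lemma grevlexLT_single_add_single {a b c e : SymIdx d} (hab : varLT a b) (hac : varLT a c)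
    (hae : varLT a e) :
    grevlexLT (Finsupp.single a 1 + Finsupp.single b 1)
      (Finsupp.single c 1 + Finsupp.single e 1) := by
  have mdeg_pair (x y : SymIdx d) : mdeg (Finsupp.single x 1 + Finsupp.single y 1) = 2 := by
    simp [mdeg, Finsupp.sum_add_index']
  refine Or.inr ⟨by rw [mdeg_pair, mdeg_pair], a, ?_, fun q hq => ?_⟩
  · simp [Finsupp.single_apply, ne_of_varLT hac, ne_of_varLT hae]
  · simp [(ne_of_varLT hq).symm, (ne_of_varLT (varLT_trans hq hab)).symm,
      (ne_of_varLT (varLT_trans hq hac)).symm, (ne_of_varLT (varLT_trans hq hae)).symm]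

end Grevlex

section LeadingMonomials

variable {K : Type*} [Field K]

lemma isLeadMon_monomial_sub_monomial {μ ν : SymIdx d →₀ ℕ} (h : grevlexLT μ ν) :
    IsLeadMon (monomial μ (1 : K) - monomial ν 1) ν := by
  classical
  have hμν : μ ≠ ν := by
    rintro rfl
    exact grevlexLT_irrefl μ h
  refine ⟨by simp [coeff_monomial, hμν], fun η hη hην => ?_⟩
  have hη' := support_sub (SymIdx d) (monomial μ (1 : K)) (monomial ν 1) hη
  simp only [Finset.mem_union, support_monomial, one_ne_zero, if_false,
    Finset.mem_singleton] at hη'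
  rcases hη' with rfl | rfl
  · exact h
  · exact absurd rfl hην

/-- In a vanishing combination, the `ω`-largest leading monomial with nonzero coefficient
occurs in no other term. -/
theorem linearIndependent_of_isLeadMon {ι : Type*} [Finite ι] {F : ι → MvPolynomial (SymIdx d) K}
    {μ : ι → SymIdx d →₀ ℕ} (hμ : Function.Injective μ) (hF : ∀ i, IsLeadMon (F i) (μ i)) :
    LinearIndependent K F := by
  classical
  have := Fintype.ofFinite ι
  rw [Fintype.linearIndependent_iff]
  intro g hg
  by_contra! hne
  let above : ι → ι → Prop := fun i j => grevlexLT (μ j) (μ i)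
  have : IsTrans ι above := ⟨fun _ _ _ hij hjk => grevlexLT_trans hjk hij⟩
  have : Std.Irrefl above := ⟨fun i => grevlexLT_irrefl (μ i)⟩
  obtain ⟨i, hi, hmax⟩ := (Finite.wellFounded_of_trans_of_irrefl above).has_min
    {i | g i ≠ 0} hne
  have hcoeff := congrArg (coeff (μ i)) hg
  rw [coeff_sum, coeff_zero, Finset.sum_eq_single i] at hcoeff
  · exact hi (by simpa [mem_support_iff.1 (hF i).1] using hcoeff)
  · intro j _ hji
    by_cases hj : g j = 0
    · simp [hj]
    have hnot : μ i ∉ (F j).support := fun hmem =>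
      hmax j hj ((hF j).2 (μ i) hmem (hμ.ne hji.symm))
    simp [notMem_support_iff.1 hnot]
  · simp

end LeadingMonomials

section HilbertFunction

variable {K : Type*} [Field K]

theorem ncard_le_HFI {N : Ideal (MvPolynomial (SymIdx d) K)} {n : ℕ} {S : Set (SymIdx d →₀ ℕ)}
    (hS : ∀ μ ∈ S, ∃ F ∈ N, F ∈ homogeneousSubmodule (SymIdx d) K n ∧ IsLeadMon F μ) :
    S.ncard ≤ HFI K d N n := by
  obtain hinf | hfin := S.infinite_or_finite
  · simp [hinf.ncard]
  have := hfin.fintype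
  choose F hFN hFhom hFlead using hS
  let V := Submodule.restrictScalars K N ⊓ homogeneousSubmodule (SymIdx d) K n
  have : Module.Finite K (homogeneousSubmodule (SymIdx d) K n) :=
    Module.Finite.iff_fg.2 (homogeneousSubmodule_fg _ _ n)
  have : Module.Finite K V := Submodule.finiteDimensional_of_le inf_le_right
  let f : S → V := fun μ => ⟨F μ μ.2, hFN _ _, hFhom _ _⟩
  have hf : LinearIndependent K f := .of_comp V.subtype
    (linearIndependent_of_isLeadMon Subtype.val_injective fun μ => hFlead μ μ.2)
  rw [← Nat.card_coe_set_eq, Nat.card_eq_fintype_card]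
  exact hf.fintype_card_le_finrank

end HilbertFunction

section Minors

variable {K : Type*} [Field K]

lemma wexp_of_lt {i j : Idx d} (h : i < j) :
    wexp d i j = Finsupp.single (SymIdx.ofLT h) 1 := by
  have hd : ¬((min i j).1 = d ∧ (max i j).1 = d) := by
    rw [min_eq_left h.le, max_eq_right h.le]
    exact (SymIdx.ofLT h).2.2
  rw [wexp, dif_neg hd]
  congr 1
  exact Subtype.ext (Prod.ext (min_eq_left h.le) (max_eq_right h.le))

lemma wv_of_lt {i j : Idx d} (h : i < j) : wv K d i j = monomial (wexp d i j) 1 := by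
  have hd : ¬((min i j).1 = d ∧ (max i j).1 = d) := by
    rw [min_eq_left h.le, max_eq_right h.le]
    exact (SymIdx.ofLT h).2.2
  rw [wv, wexp, dif_neg hd, dif_neg hd]
  rfl

lemma wv_comm (i j : Idx d) : wv K d i j = wv K d j i := by
  simp only [wv, min_comm i j, max_comm i j]

lemma inA_zero_iff (m : Sub2 d) : inA 0 m ↔ Disjoint m.rows m.cols := by
  rw [inA, Finset.card_eq_zero, Finset.disjoint_iff_inter_eq_empty]

lemma isLeadMon_sdet_il_jk {i j k l : Idx d} (hij : i < j) (hjk : j < k) (hkl : k < l) :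
    IsLeadMon (sdet K d ⟨i, l, j, k, hij.trans (hjk.trans hkl), hjk⟩)
      (wexp d i k + wexp d j l) := by
  have : i.1 < j.1 ∧ j.1 < k.1 ∧ k.1 < l.1 := ⟨hij, hjk, hkl⟩
  have hik := hij.trans hjk
  have hjl := hjk.trans hkl
  simp only [sdet, wv_comm l, wv_of_lt hij, wv_of_lt hkl, wv_of_lt hik, wv_of_lt hjl,
    monomial_mul, one_mul]
  apply isLeadMon_monomial_sub_monomial
  rw [wexp_of_lt hij, wexp_of_lt hkl, wexp_of_lt hik, wexp_of_lt hjl]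
  apply grevlexLT_single_add_single <;> rw [varLT_ofLT_iff] <;> omega

lemma isLeadMon_sdet_ij_kl {i j k l : Idx d} (hij : i < j) (hjk : j < k) (hkl : k < l) :
    IsLeadMon (sdet K d ⟨i, j, k, l, hij, hkl⟩) (wexp d i l + wexp d j k) := by
  have : i.1 < j.1 ∧ j.1 < k.1 ∧ k.1 < l.1 := ⟨hij, hjk, hkl⟩
  have hik := hij.trans hjk
  have hjl := hjk.trans hkl
  have hil := hik.trans hkl
  simp only [sdet, wv_of_lt hik, wv_of_lt hjl, wv_of_lt hil, wv_of_lt hjk, monomial_mul, one_mul]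
  apply isLeadMon_monomial_sub_monomial
  rw [wexp_of_lt hik, wexp_of_lt hjl, wexp_of_lt hil, wexp_of_lt hjk]
  apply grevlexLT_single_add_single <;> rw [varLT_ofLT_iff] <;> omega

lemma exists_inA_zero_isLeadMon_sdet {μ : SymIdx d →₀ ℕ} (hμ : μ ∈ K0set d) :
    ∃ m : Sub2 d, inA 0 m ∧ IsLeadMon (sdet K d m) μ := by
  obtain ⟨i, j, k, l, hij, hjk, hkl, rfl | rfl⟩ := hμ
  on_goal 1 => refine ⟨_, ?_, isLeadMon_sdet_il_jk hij hjk hkl⟩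
  on_goal 2 => refine ⟨_, ?_, isLeadMon_sdet_ij_kl hij hjk hkl⟩
  all_goals
    have : i.1 < j.1 ∧ j.1 < k.1 ∧ k.1 < l.1 := ⟨hij, hjk, hkl⟩
    simp only [inA_zero_iff, Sub2.rows, Sub2.cols, Finset.disjoint_insert_right,
      Finset.mem_insert, Subtype.ext_iff, Finset.mem_singleton, not_or,
      Finset.disjoint_singleton_right]
    omega

lemma sdet_mem_Lam0 {m : Sub2 d} (hm : inA 0 m) : sdet K d m ∈ Lam0 K d :=
  Ideal.subset_span ⟨m, hm, rfl⟩

lemma wv_isHomogeneous (i j : Idx d) : (wv K d i j).IsHomogeneous 1 := by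
  unfold wv
  split_ifs
  · exact isHomogeneous_zero _ _ _
  · exact isHomogeneous_X _ _

lemma sdet_mem_homogeneousSubmodule (m : Sub2 d) :
    sdet K d m ∈ homogeneousSubmodule (SymIdx d) K 2 :=
  ((wv_isHomogeneous _ _).mul (wv_isHomogeneous _ _)).sub
    ((wv_isHomogeneous _ _).mul (wv_isHomogeneous _ _))

end Minors

section Counting

noncomputable def k0Mon : (Fin 4 ↪o Idx d) × Bool → SymIdx d →₀ ℕ
  | (t, false) => wexp d (t 0) (t 2) + wexp d (t 1) (t 3)
  | (t, true) => wexp d (t 0) (t 3) + wexp d (t 1) (t 2)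

lemma k0Mon_injective : Function.Injective (k0Mon (d := d)) := by
  rintro ⟨t, b⟩ ⟨t', b'⟩ h
  have ht : (t 0).1 < (t 1).1 ∧ (t 1).1 < (t 2).1 ∧ (t 2).1 < (t 3).1 :=
    ⟨t.strictMono (by decide), t.strictMono (by decide), t.strictMono (by decide)⟩
  have ht' : (t' 0).1 < (t' 1).1 ∧ (t' 1).1 < (t' 2).1 ∧ (t' 2).1 < (t' 3).1 :=
    ⟨t'.strictMono (by decide), t'.strictMono (by decide), t'.strictMono (by decide)⟩
  cases b <;> cases b' <;>
    simp only [k0Mon, Fin.isValue, OrderEmbedding.lt_iff_lt, Fin.reduceLT, wexp_of_lt, ne_eq,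
      one_ne_zero, not_false_eq_true, Finsupp.single_add_single_eq_single_add_single,
      SymIdx.ofLT_inj, true_and, Nat.reduceAdd, OfNat.ofNat_ne_zero, false_and, or_false] at h
  all_goals
    first
    | (exfalso; omega)
    | (congr 1; ext a; fin_cases a <;>
        simp only [Fin.isValue, Fin.zero_eta, Fin.mk_one, Fin.reduceFinMk] <;> omega)

lemma K0set_eq_range : K0set d = Set.range k0Mon := by
  ext μ
  constructor
  · rintro ⟨i, j, k, l, hij, hjk, hkl, hμ⟩
    let t : Fin 4 ↪o Idx d := OrderEmbedding.ofStrictMono ![i, j, k, l]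
      (Fin.strictMono_iff_lt_succ.2 fun a => by fin_cases a <;> assumption)
    rcases hμ with rfl | rfl
    exacts [⟨(t, false), rfl⟩, ⟨(t, true), rfl⟩]
  · rintro ⟨⟨t, b⟩, rfl⟩
    refine ⟨t 0, t 1, t 2, t 3, t.strictMono (by decide), t.strictMono (by decide),
      t.strictMono (by decide), ?_⟩
    cases b
    exacts [Or.inl rfl, Or.inr rfl]

lemma ncard_K0set : (K0set d).ncard = 2 * d.choose 4 := by
  rw [K0set_eq_range, Set.ncard_range_of_injective k0Mon_injective, Nat.card_prod,
    Nat.card_congr Set.powersetCard.ofFinEmbEquiv, Set.powersetCard.card]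
  simp [mul_comm]

end Counting

theorem K0_subset_initial_Lam0_general (K : Type*) [Field K] (d : ℕ) :
    (∀ μ ∈ K0set d, ∃ F ∈ Lam0 K d, IsLeadMon F μ) ∧
    (K0set d).ncard = 2 * Nat.choose d 4 ∧
    2 * Nat.choose d 4 ≤ HFI K d (Lam0 K d) 2 := by
  have hlead : ∀ μ ∈ K0set d,
      ∃ F ∈ Lam0 K d, F ∈ homogeneousSubmodule (SymIdx d) K 2 ∧ IsLeadMon F μ := by
    intro μ hμ
    obtain ⟨m, hm, hF⟩ := exists_inA_zero_isLeadMon_sdet (K := K) hμ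
    exact ⟨sdet K d m, sdet_mem_Lam0 hm, sdet_mem_homogeneousSubmodule m, hF⟩
  refine ⟨fun μ hμ => ?_, ncard_K0set, ncard_K0set ▸ ncard_le_HFI hlead⟩
  obtain ⟨F, hF, -, hFμ⟩ := hlead μ hμ
  exact ⟨F, hF, hFμ⟩

/-- Every monomial in `K₀ = {w_{ik}w_{jl}, w_{il}w_{jk} : i < j < k < l}` is the
`ω`-leading monomial of an element of `Λ₀` (hence `K₀ ⊆ in(Λ₀)`); moreover
`HF_{Λ₀}(2) ≥ |K₀| = 2 · C(d,4)`. -/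
theorem K0_subset_initial_Lam0 (K : Type*) [Field K] [CharZero K] (d : ℕ) (hd : 4 ≤ d) :
    (∀ μ ∈ K0set d, ∃ F ∈ Lam0 K d, IsLeadMon F μ) ∧
    (K0set d).ncard = 2 * Nat.choose d 4 ∧
    2 * Nat.choose d 4 ≤ HFI K d (Lam0 K d) 2 :=
  K0_subset_initial_Lam0_general K d
end
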